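/- Let H be an entropy, with maximal extension D̄_H and minimal extension D̲_H. Then: (i) both D̄_H and D̲_H satisfy the data-processing inequality, i.e. (p,q) ≽ (p',q') implies D̄_H(p'‖q') ≤ D̄_H(p‖q) and D̲_H(p'‖q') ≤ D̲_H(p‖q), and both vanish at (1‖1); (ii) D̲_H(p‖q) ≤ D̄_H(p‖q) for all n ∈ ℕ and p,q ∈ P(n); (iii) for all m,n ∈ ℕ, p,q ∈ P(n) and p',q' ∈ P(m): D̲_H(p⊗p'‖q⊗q') ≥ D̲_H(p‖q) + D̲_H(p'‖q') and D̄_H(p⊗p'‖q⊗q') ≤ D̄_H(p‖q) + D̄_H(p'‖q'). -/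

import Mathlib

open scoped BigOperators ENNReal

/-- A probability vector: nonnegative entries summing to 1. -/
def IsProbVec {n : ℕ} (p : Fin n → ℝ) : Prop :=
  (∀ i, 0 ≤ p i) ∧ ∑ i, p i = 1

/-- The uniform probability vector on `n` outcomes. -/
noncomputable def uniform (n : ℕ) : Fin n → ℝ := fun _ => (n : ℝ)⁻¹

/-- Kronecker (tensor) product of two vectors. -/
noncomputable def kron {n m : ℕ} (p : Fin n → ℝ) (q : Fin m → ℝ) : Fin (n * m) → ℝ :=
  fun i => p (finProdFinEquiv.symm i).1 * q (finProdFinEquiv.symm i).2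

/-- Sum of the `k` largest entries (for vectors with nonnegative entries):
the supremum of sums over subsets of at most `k` indices. -/
noncomputable def maxPartialSum {n : ℕ} (p : Fin n → ℝ) (k : ℕ) : ℝ :=
  sSup { x | ∃ s : Finset (Fin n), s.card ≤ k ∧ ∑ i ∈ s, p i = x }

/-- `p` majorises `q`: every partial sum of the `k` largest entries of `p`
dominates that of `q` (entries beyond a vector's length count as 0). -/
def Majorizes {n m : ℕ} (p : Fin n → ℝ) (q : Fin m → ℝ) : Prop :=
  ∀ k : ℕ, maxPartialSum q k ≤ maxPartialSum p k

/-- A channel: an `n × m` row-stochastic matrix. -/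
def IsStochastic {n m : ℕ} (W : Matrix (Fin n) (Fin m) ℝ) : Prop :=
  (∀ i j, 0 ≤ W i j) ∧ ∀ i, ∑ j, W i j = 1

/-- Relative majorisation of pairs: some channel maps `(p, q)` to `(p', q')`. -/
def RelMaj {n m : ℕ} (p q : Fin n → ℝ) (p' q' : Fin m → ℝ) : Prop :=
  ∃ W : Matrix (Fin n) (Fin m) ℝ, IsStochastic W ∧
    Matrix.vecMul p W = p' ∧ Matrix.vecMul q W = q'

/-- An entropy: a `[0,∞)`-valued function on probability vectors of all finite dimensions
that is monotone under mixing (majorisation), additive for Kronecker products,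
and normalised so that `H(u₂) = log 2` (binary logarithm). -/
structure IsEntropy (H : (n : ℕ) → (Fin n → ℝ) → ℝ) : Prop where
  nonneg : ∀ {n : ℕ} (p : Fin n → ℝ), IsProbVec p → 0 ≤ H n p
  mono : ∀ {n m : ℕ} (p : Fin n → ℝ) (p' : Fin m → ℝ),
    IsProbVec p → IsProbVec p' → Majorizes p p' → H n p ≤ H m p'
  additive : ∀ {n m : ℕ} (p : Fin n → ℝ) (q : Fin m → ℝ),
    IsProbVec p → IsProbVec q → H (n * m) (kron p q) = H n p + H m q
  normalized : H 2 (uniform 2) = Real.logb 2 2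

/-- A monotone divergence: a `[0,∞]`-valued function on pairs of probability vectors of
equal finite dimension satisfying the data-processing inequality and `𝔻(1‖1) = 0`. -/
structure IsMonotoneDivergence (D : (n : ℕ) → (Fin n → ℝ) → (Fin n → ℝ) → ℝ≥0∞) : Prop where
  dpi : ∀ {n m : ℕ} (p q : Fin n → ℝ) (p' q' : Fin m → ℝ),
    IsProbVec p → IsProbVec q → IsProbVec p' → IsProbVec q' →
    RelMaj p q p' q' → D m p' q' ≤ D n p q
  normalized : D 1 (fun _ => 1) (fun _ => 1) = 0

/-- A relative entropy: data-processing inequality, additivity for Kronecker products,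
and the normalisation `𝔻(e₁‖u₂) = log 2` (binary logarithm). -/
structure IsRelativeEntropy (D : (n : ℕ) → (Fin n → ℝ) → (Fin n → ℝ) → ℝ≥0∞) : Prop where
  dpi : ∀ {n m : ℕ} (p q : Fin n → ℝ) (p' q' : Fin m → ℝ),
    IsProbVec p → IsProbVec q → IsProbVec p' → IsProbVec q' →
    RelMaj p q p' q' → D m p' q' ≤ D n p q
  additive : ∀ {n m : ℕ} (p₁ q₁ : Fin n → ℝ) (p₂ q₂ : Fin m → ℝ),
    IsProbVec p₁ → IsProbVec q₁ → IsProbVec p₂ → IsProbVec q₂ →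
    D (n * m) (kron p₁ p₂) (kron q₁ q₂) = D n p₁ q₁ + D m p₂ q₂
  normalized : D 2 ![1, 0] ![1/2, 1/2] = ENNReal.ofReal (Real.logb 2 2)

/-- The maximal extension of an entropy `H`:
`D̄_H(p‖q) := inf { log k − H(r) : k ∈ ℕ, r ∈ P(k), (r, u_k) ≽ (p, q) }`. -/
noncomputable def DmaxExt (H : (n : ℕ) → (Fin n → ℝ) → ℝ) :
    (n : ℕ) → (Fin n → ℝ) → (Fin n → ℝ) → ℝ≥0∞ :=
  fun _ p q => ⨅ (k : ℕ) (r : Fin k → ℝ) (_ : IsProbVec r)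
    (_ : RelMaj r (uniform k) p q), ENNReal.ofReal (Real.logb 2 k - H k r)

/-- The minimal extension of an entropy `H`:
`D̲_H(p‖q) := sup { log k − H(r) : k ∈ ℕ, r ∈ P(k), (p, q) ≽ (r, u_k) }`. -/
noncomputable def DminExt (H : (n : ℕ) → (Fin n → ℝ) → ℝ) :
    (n : ℕ) → (Fin n → ℝ) → (Fin n → ℝ) → ℝ≥0∞ :=
  fun _ p q => ⨆ (k : ℕ) (r : Fin k → ℝ) (_ : IsProbVec r)
    (_ : RelMaj p q r (uniform k)), ENNReal.ofReal (Real.logb 2 k - H k r)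

/-! Both extensions optimise `log k - H(r)` over pairs `(r, u_k)` above, resp. below, `(p, q)`
in the relative-majorisation order. The data-processing inequality is transitivity of that
order, and the tensor bounds come from tensoring candidates, since `H` and `log` are additive.

Two facts carry the rest. First, `H(u_k) = log k`, because `k ↦ H(u_k)` is monotone, additive
under products and equal to `1` at `2`. Second, `D̲_H ≤ D̄_H` reduces to: if
`(r', u_k') ≽ (r, u_k)`, then tensoring the channel with the one sending everything to `u_k'`
gives a channel mapping `u_{k'k}` to `u_{kk'}`, i.e. a doubly stochastic one, so `r' ⊗ u_k`
majorises `r ⊗ u_k'`, and monotonicity and additivity of `H` give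
`log k - H(r) ≤ log k' - H(r')`. -/

open Finset Matrix
open scoped Kronecker

lemma IsProbVec.dim_pos {n : ℕ} {p : Fin n → ℝ} (hp : IsProbVec p) : 0 < n := by
  rcases n.eq_zero_or_pos with rfl | hn
  · simpa using hp.2
  · exact hn

lemma uniform_one : uniform 1 = fun _ => 1 := by
  funext
  simp [uniform]

lemma isProbVec_uniform {n : ℕ} (hn : 0 < n) : IsProbVec (uniform n) :=
  ⟨fun _ => by unfold uniform; positivity, by simp [uniform, hn.ne']⟩

lemma sum_kron {n m : ℕ} (p : Fin n → ℝ) (q : Fin m → ℝ) :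
    ∑ i, kron p q i = (∑ i, p i) * ∑ j, q j := by
  rw [sum_mul_sum, ← finProdFinEquiv.sum_comp, Fintype.sum_prod_type]
  simp [kron]

lemma IsProbVec.kron {n m : ℕ} {p : Fin n → ℝ} {q : Fin m → ℝ} (hp : IsProbVec p)
    (hq : IsProbVec q) : IsProbVec (kron p q) :=
  ⟨fun _ => mul_nonneg (hp.1 _) (hq.1 _), by rw [sum_kron, hp.2, hq.2, one_mul]⟩

lemma kron_uniform (n m : ℕ) : kron (uniform n) (uniform m) = uniform (n * m) := by
  funext
  simp [kron, uniform, mul_comm]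

lemma IsStochastic.mul {n m l : ℕ} {W : Matrix (Fin n) (Fin m) ℝ} {V : Matrix (Fin m) (Fin l) ℝ}
    (hW : IsStochastic W) (hV : IsStochastic V) : IsStochastic (W * V) := by
  refine ⟨fun i j => ?_, fun i => ?_⟩
  · rw [mul_apply]
    exact sum_nonneg fun k _ => mul_nonneg (hW.1 i k) (hV.1 k j)
  · simp_rw [mul_apply]
    rw [sum_comm]
    simp_rw [← mul_sum, hV.2, mul_one, hW.2]

lemma RelMaj.trans {n m l : ℕ} {p q : Fin n → ℝ} {p' q' : Fin m → ℝ} {p'' q'' : Fin l → ℝ}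
    (h : RelMaj p q p' q') (h' : RelMaj p' q' p'' q'') : RelMaj p q p'' q'' := by
  obtain ⟨W, hW, rfl, rfl⟩ := h
  obtain ⟨V, hV, rfl, rfl⟩ := h'
  exact ⟨W * V, hW.mul hV, (vecMul_vecMul _ _ _).symm, (vecMul_vecMul _ _ _).symm⟩

lemma relMaj_uniform {n m : ℕ} {p q : Fin n → ℝ} (hp : IsProbVec p) (hq : IsProbVec q)
    (hm : 0 < m) : RelMaj p q (uniform m) (uniform m) := by
  have hu := isProbVec_uniform hm
  refine ⟨of fun _ => uniform m, ⟨fun _ => hu.1, fun _ => hu.2⟩, ?_, ?_⟩ <;>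
  · funext j
    simp only [vecMul_apply_eq_sum, of_apply, ← sum_mul, hp.2, hq.2, one_mul]

lemma kron_vecMul_kronecker {n m n' m' : ℕ} (p : Fin n → ℝ) (r : Fin n' → ℝ)
    (W : Matrix (Fin n) (Fin m) ℝ) (V : Matrix (Fin n') (Fin m') ℝ) :
    kron p r ᵥ* (W ⊗ₖ V).submatrix finProdFinEquiv.symm finProdFinEquiv.symm
      = kron (p ᵥ* W) (r ᵥ* V) := by
  funext y
  simp only [vecMul_apply_eq_sum, kron, submatrix_apply, kroneckerMap_apply, sum_mul_sum]
  rw [← finProdFinEquiv.sum_comp, Fintype.sum_prod_type]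
  simp only [Equiv.symm_apply_apply]
  exact sum_congr rfl fun a _ => sum_congr rfl fun b _ => by ring

lemma IsStochastic.kronecker {n m n' m' : ℕ} {W : Matrix (Fin n) (Fin m) ℝ}
    {V : Matrix (Fin n') (Fin m') ℝ} (hW : IsStochastic W) (hV : IsStochastic V) :
    IsStochastic ((W ⊗ₖ V).submatrix finProdFinEquiv.symm finProdFinEquiv.symm) := by
  refine ⟨fun _ _ => mul_nonneg (hW.1 _ _) (hV.1 _ _), fun x => ?_⟩
  simp only [submatrix_apply, kroneckerMap_apply]
  rw [← finProdFinEquiv.sum_comp, Fintype.sum_prod_type]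
  simp only [Equiv.symm_apply_apply, ← sum_mul_sum, hW.2, hV.2, one_mul]

lemma RelMaj.kron {n m n' m' : ℕ} {p q : Fin n → ℝ} {p' q' : Fin m → ℝ}
    {r s : Fin n' → ℝ} {r' s' : Fin m' → ℝ} (h : RelMaj p q p' q') (h' : RelMaj r s r' s') :
    RelMaj (kron p r) (kron q s) (kron p' r') (kron q' s') := by
  obtain ⟨W, hW, rfl, rfl⟩ := h
  obtain ⟨V, hV, rfl, rfl⟩ := h'
  exact ⟨_, hW.kronecker hV, kron_vecMul_kronecker _ _ _ _, kron_vecMul_kronecker _ _ _ _⟩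

lemma sum_le_maxPartialSum {n k : ℕ} (p : Fin n → ℝ) {s : Finset (Fin n)} (hs : #s ≤ k) :
    ∑ i ∈ s, p i ≤ maxPartialSum p k :=
  le_csSup ((Set.finite_range fun s : Finset (Fin n) => ∑ i ∈ s, p i).subset
    (by rintro _ ⟨s, -, rfl⟩; exact ⟨s, rfl⟩)).bddAbove ⟨s, hs, rfl⟩

lemma maxPartialSum_le {n k : ℕ} {p : Fin n → ℝ} {a : ℝ}
    (h : ∀ s : Finset (Fin n), #s ≤ k → ∑ i ∈ s, p i ≤ a) : maxPartialSum p k ≤ a :=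
  csSup_le ⟨0, ∅, by simp⟩ fun _ ⟨s, hs, hx⟩ => hx ▸ h s hs

lemma exists_card_eq_min_forall_le {ι α : Type*} [Fintype ι] [DecidableEq ι] [LinearOrder α]
    (p : ι → α) (t : ℕ) :
    ∃ s : Finset ι, #s = min t (Fintype.card ι) ∧ ∀ i ∈ s, ∀ j ∉ s, p j ≤ p i := by
  induction t with
  | zero => exact ⟨∅, by simp, by simp⟩
  | succ t ih =>
    obtain ⟨s, hcard, hs⟩ := ih
    rcases sᶜ.eq_empty_or_nonempty with hsc | hsc
    · rw [compl_eq_empty_iff] at hsc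
      subst hsc
      exact ⟨univ, by rw [card_univ] at hcard ⊢; omega, by simp⟩
    · obtain ⟨j₀, hj₀, hmax⟩ := sᶜ.exists_max_image p hsc
      rw [mem_compl] at hj₀
      have hlt := card_lt_univ_of_notMem hj₀
      refine ⟨insert j₀ s, by rw [card_insert_of_notMem hj₀]; omega, ?_⟩
      simp only [mem_insert, not_or]
      rintro i (rfl | hi) j ⟨-, hj⟩
      · exact hmax j (mem_compl.mpr hj)
      · exact hs i hi j hj

lemma sum_mul_le_sum_of_forall_le {ι : Type*} [Fintype ι] {p c : ι → ℝ} {s : Finset ι}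
    (hp : ∀ i, 0 ≤ p i) (hs : ∀ i ∈ s, ∀ j ∉ s, p j ≤ p i) (hc₀ : ∀ i, 0 ≤ c i)
    (hc₁ : ∀ i, c i ≤ 1) (hcs : ∑ i, c i ≤ #s) : ∑ i, p i * c i ≤ ∑ i ∈ s, p i := by
  classical
  obtain ⟨μ, hμ, hμs, hμsc⟩ : ∃ μ, 0 ≤ μ ∧ (∀ i ∈ s, μ ≤ p i) ∧ ∀ j ∉ s, p j ≤ μ := by
    rcases s.eq_empty_or_nonempty with rfl | hne
    · exact ⟨∑ i, p i, sum_nonneg fun i _ => hp i, by simp,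
        fun j _ => single_le_sum (fun i _ => hp i) (mem_univ j)⟩
    · obtain ⟨i₀, hi₀, hmin⟩ := s.exists_min_image p hne
      exact ⟨p i₀, hp i₀, hmin, hs i₀ hi₀⟩
  -- `∑ p c - ∑_s p = ∑ (p - μ) (c - 𝟙_s) + μ (∑ c - #s)`, and each term is `≤ 0`
  set e : ι → ℝ := fun i => if i ∈ s then 1 else 0
  have hterm : ∀ i, (p i - μ) * (c i - e i) ≤ 0 := by
    intro i
    by_cases hi : i ∈ s
    · simp only [e, hi, if_true]
      exact mul_nonpos_of_nonneg_of_nonpos (sub_nonneg.2 (hμs i hi)) (by linarith [hc₁ i])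
    · simp only [e, hi, if_false]
      exact mul_nonpos_of_nonpos_of_nonneg (sub_nonpos.2 (hμsc i hi)) (by linarith [hc₀ i])
  have hpe : ∑ i, p i * e i = ∑ i ∈ s, p i := by simp [e]
  have he : ∑ i, e i = #s := by simp [e]
  have hsplit : ∑ i, p i * c i - ∑ i, p i * e i
      = ∑ i, (p i - μ) * (c i - e i) + μ * (∑ i, c i - ∑ i, e i) := by
    simp only [mul_sub, sub_mul, sum_sub_distrib, mul_sum]
    ring
  have := sum_nonpos fun i (_ : i ∈ univ) => hterm i
  have := mul_nonpos_of_nonneg_of_nonpos hμ (sub_nonpos.2 (he ▸ hcs))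
  linarith

lemma sum_mul_le_maxPartialSum {n k : ℕ} {p c : Fin n → ℝ} (hp : ∀ i, 0 ≤ p i)
    (hc₀ : ∀ i, 0 ≤ c i) (hc₁ : ∀ i, c i ≤ 1) (hck : ∑ i, c i ≤ k) :
    ∑ i, p i * c i ≤ maxPartialSum p k := by
  obtain ⟨s, hcard, hs⟩ := exists_card_eq_min_forall_le p k
  have hcn : ∑ i, c i ≤ n := by simpa using sum_le_sum fun i (_ : i ∈ univ) => hc₁ i
  have hcs : ∑ i, c i ≤ #s := by
    rw [hcard, Fintype.card_fin, Nat.cast_min]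
    exact le_min hck hcn
  exact (sum_mul_le_sum_of_forall_le hp hs hc₀ hc₁ hcs).trans
    (sum_le_maxPartialSum p (hcard ▸ min_le_left _ _))

lemma majorizes_vecMul {n m : ℕ} {p : Fin n → ℝ} {W : Matrix (Fin n) (Fin m) ℝ}
    (hp : ∀ i, 0 ≤ p i) (hW : IsStochastic W) (hcol : ∀ j, ∑ i, W i j ≤ 1) :
    Majorizes p (p ᵥ* W) := by
  intro k
  refine maxPartialSum_le fun s hs => ?_
  have hswap : ∑ j ∈ s, (p ᵥ* W) j = ∑ i, p i * ∑ j ∈ s, W i j := by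
    simp only [vecMul_apply_eq_sum, mul_sum]
    exact sum_comm
  rw [hswap]
  refine sum_mul_le_maxPartialSum hp (fun i => sum_nonneg fun j _ => hW.1 i j)
    (fun i => (sum_le_univ_sum_of_nonneg (hW.1 i)).trans_eq (hW.2 i)) ?_
  calc ∑ i, ∑ j ∈ s, W i j = ∑ j ∈ s, ∑ i, W i j := sum_comm
    _ ≤ ∑ j ∈ s, 1 := sum_le_sum fun j _ => hcol j
    _ ≤ k := by simpa using hs

lemma majorizes_of_relMaj_uniform {n m : ℕ} {p : Fin n → ℝ} {p' : Fin m → ℝ} (hnm : n ≤ m)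
    (hp : ∀ i, 0 ≤ p i) (h : RelMaj p (uniform n) p' (uniform m)) : Majorizes p p' := by
  obtain ⟨W, hW, rfl, hu⟩ := h
  refine majorizes_vecMul hp hW fun j => ?_
  rcases n.eq_zero_or_pos with rfl | hn
  · simp
  have hj := congrFun hu j
  simp only [vecMul_apply_eq_sum, uniform, ← mul_sum] at hj
  rw [(inv_mul_eq_iff_eq_mul₀ (by positivity)).mp hj, ← div_eq_mul_inv]
  exact div_le_one_of_le₀ (by exact_mod_cast hnm) (by positivity)

lemma uniform_majorizes_uniform {a b : ℕ} (ha : 0 < a) (hab : a ≤ b) :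
    Majorizes (uniform a) (uniform b) :=
  majorizes_of_relMaj_uniform hab (isProbVec_uniform ha).1
    (relMaj_uniform (isProbVec_uniform ha) (isProbVec_uniform ha) (ha.trans_le hab))

theorem eq_logb_two_of_map_mul_of_monotone {f : ℕ → ℝ}
    (hmul : ∀ a b, 0 < a → 0 < b → f (a * b) = f a + f b)
    (hmono : ∀ a b, 0 < a → a ≤ b → f a ≤ f b) (h₂ : f 2 = 1) {k : ℕ} (hk : 0 < k) :
    f k = Real.logb 2 k := by
  have hpow : ∀ {a : ℕ}, 0 < a → ∀ m : ℕ, f (a ^ m) = m * f a := by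
    intro a ha m
    induction m with
    | zero => simpa using hmul 1 1 one_pos one_pos
    | succ m ih =>
      rw [pow_succ, hmul _ _ (pow_pos ha m) ha, ih]
      push_cast
      ring
  have hlogb_two_pow : ∀ a : ℕ, Real.logb 2 ((2 : ℝ) ^ a) = a := fun a => by
    rw [Real.logb_pow, Real.logb_self_eq_one one_lt_two, mul_one]
  -- with `a = ⌊log₂ kᵐ⌋`, both `m f(k)` and `m log₂ k` lie in `[a, a + 1]`
  have hclose : ∀ m : ℕ, m * |f k - Real.logb 2 k| ≤ 1 := by
    intro m
    set a := Nat.log 2 (k ^ m)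
    have hlo : 2 ^ a ≤ k ^ m := Nat.pow_log_le_self 2 (pow_ne_zero m hk.ne')
    have hhi : k ^ m ≤ 2 ^ (a + 1) := (Nat.lt_pow_succ_log_self one_lt_two _).le
    have hf₁ := hmono _ _ (pow_pos two_pos a) hlo
    have hf₂ := hmono _ _ (pow_pos hk m) hhi
    rw [hpow two_pos, hpow hk, h₂] at hf₁
    rw [hpow two_pos, hpow hk, h₂] at hf₂
    have hkm : (0 : ℝ) < (k : ℝ) ^ m := by positivity
    have hl₁ := Real.logb_le_logb_of_le one_lt_two (by positivity)
      (show (2 : ℝ) ^ a ≤ (k : ℝ) ^ m by exact_mod_cast hlo)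
    have hl₂ := Real.logb_le_logb_of_le one_lt_two hkm
      (show (k : ℝ) ^ m ≤ 2 ^ (a + 1) by exact_mod_cast hhi)
    rw [hlogb_two_pow, Real.logb_pow] at hl₁ hl₂
    rw [← abs_of_nonneg (Nat.cast_nonneg (α := ℝ) m), ← abs_mul, abs_le]
    push_cast at *
    constructor <;> linarith
  by_contra hne
  have hpos : 0 < |f k - Real.logb 2 k| := abs_pos.mpr (sub_ne_zero.mpr hne)
  obtain ⟨m, hm⟩ := exists_nat_gt (1 / |f k - Real.logb 2 k|)
  rw [div_lt_iff₀ hpos] at hm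
  linarith [hclose m]

noncomputable def deficit (H : (n : ℕ) → (Fin n → ℝ) → ℝ) {k : ℕ} (r : Fin k → ℝ) : ℝ :=
  Real.logb 2 k - H k r

namespace IsEntropy

variable {H : (n : ℕ) → (Fin n → ℝ) → ℝ} (hH : IsEntropy H)
include hH

theorem apply_uniform {k : ℕ} (hk : 0 < k) : H k (uniform k) = Real.logb 2 k :=
  eq_logb_two_of_map_mul_of_monotone (f := fun k => H k (uniform k))
    (fun a b ha hb => by
      simpa only [kron_uniform] using
        hH.additive _ _ (isProbVec_uniform ha) (isProbVec_uniform hb))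
    (fun a b ha hab => hH.mono _ _ (isProbVec_uniform ha) (isProbVec_uniform (ha.trans_le hab))
      (uniform_majorizes_uniform ha hab))
    (hH.normalized.trans (Real.logb_self_eq_one one_lt_two)) hk

lemma deficit_uniform {k : ℕ} (hk : 0 < k) : deficit H (uniform k) = 0 := by
  rw [deficit, hH.apply_uniform hk, sub_self]

lemma deficit_kron {k k' : ℕ} {r : Fin k → ℝ} {r' : Fin k' → ℝ} (hr : IsProbVec r)
    (hr' : IsProbVec r') : deficit H (kron r r') = deficit H r + deficit H r' := by
  simp only [deficit, hH.additive _ _ hr hr', Nat.cast_mul]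
  rw [Real.logb_mul (by exact_mod_cast hr.dim_pos.ne') (by exact_mod_cast hr'.dim_pos.ne')]
  ring

lemma deficit_le_deficit_of_relMaj {k k' : ℕ} {r : Fin k → ℝ} {r' : Fin k' → ℝ}
    (hr : IsProbVec r) (hr' : IsProbVec r') (h : RelMaj r' (uniform k') r (uniform k)) :
    deficit H r ≤ deficit H r' := by
  have hk := hr.dim_pos
  have hk' := hr'.dim_pos
  have hkron : RelMaj (kron r' (uniform k)) (uniform (k' * k)) (kron r (uniform k'))
      (uniform (k * k')) := by
    simpa only [kron_uniform] using
      h.kron (relMaj_uniform (isProbVec_uniform hk) (isProbVec_uniform hk) hk')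
  have hprob := hr'.kron (isProbVec_uniform hk)
  have hmono := hH.mono _ _ hprob (hr.kron (isProbVec_uniform hk'))
    (majorizes_of_relMaj_uniform (Nat.mul_comm k' k).le hprob.1 hkron)
  rw [hH.additive _ _ hr' (isProbVec_uniform hk), hH.additive _ _ hr (isProbVec_uniform hk'),
    hH.apply_uniform hk, hH.apply_uniform hk'] at hmono
  simp only [deficit]
  linarith

end IsEntropy

structure UniformCoarsening {n : ℕ} (p q : Fin n → ℝ) where
  k : ℕ
  r : Fin k → ℝ
  isProbVec : IsProbVec r
  relMaj : RelMaj p q r (uniform k)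

structure UniformRefinement {n : ℕ} (p q : Fin n → ℝ) where
  k : ℕ
  r : Fin k → ℝ
  isProbVec : IsProbVec r
  relMaj : RelMaj r (uniform k) p q

section Extensions

variable {n m : ℕ}

noncomputable def UniformCoarsening.kron {p q : Fin n → ℝ} {p' q' : Fin m → ℝ}
    (w : UniformCoarsening p q) (w' : UniformCoarsening p' q') :
    UniformCoarsening (kron p p') (kron q q') :=
  ⟨w.k * w'.k, _root_.kron w.r w'.r, w.isProbVec.kron w'.isProbVec,
    kron_uniform w.k w'.k ▸ w.relMaj.kron w'.relMaj⟩

noncomputable def UniformRefinement.kron {p q : Fin n → ℝ} {p' q' : Fin m → ℝ}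
    (w : UniformRefinement p q) (w' : UniformRefinement p' q') :
    UniformRefinement (kron p p') (kron q q') :=
  ⟨w.k * w'.k, _root_.kron w.r w'.r, w.isProbVec.kron w'.isProbVec,
    kron_uniform w.k w'.k ▸ w.relMaj.kron w'.relMaj⟩

noncomputable def UniformCoarsening.unit {p q : Fin n → ℝ} (hp : IsProbVec p)
    (hq : IsProbVec q) : UniformCoarsening p q :=
  ⟨1, uniform 1, isProbVec_uniform one_pos, relMaj_uniform hp hq one_pos⟩

variable {H : (n : ℕ) → (Fin n → ℝ) → ℝ}

lemma dminExt_eq_iSup (p q : Fin n → ℝ) :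
    DminExt H n p q = ⨆ w : UniformCoarsening p q, ENNReal.ofReal (deficit H w.r) :=
  le_antisymm (iSup₂_le fun k r => iSup₂_le fun hr h => le_iSup_of_le ⟨k, r, hr, h⟩ le_rfl)
    (iSup_le fun w => le_iSup₂_of_le w.k w.r <| le_iSup₂_of_le w.isProbVec w.relMaj le_rfl)

lemma dmaxExt_eq_iInf (p q : Fin n → ℝ) :
    DmaxExt H n p q = ⨅ w : UniformRefinement p q, ENNReal.ofReal (deficit H w.r) :=
  le_antisymm
    (le_iInf fun w => iInf₂_le_of_le w.k w.r <| iInf₂_le_of_le w.isProbVec w.relMaj le_rfl)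
    (le_iInf₂ fun k r => le_iInf₂ fun hr h => iInf_le_of_le ⟨k, r, hr, h⟩ le_rfl)

lemma dminExt_le_of_relMaj {p q : Fin n → ℝ} {p' q' : Fin m → ℝ} (h : RelMaj p q p' q') :
    DminExt H m p' q' ≤ DminExt H n p q := by
  rw [dminExt_eq_iSup, dminExt_eq_iSup]
  exact iSup_le fun w => le_iSup_of_le ⟨w.k, w.r, w.isProbVec, h.trans w.relMaj⟩ le_rfl

lemma dmaxExt_le_of_relMaj {p q : Fin n → ℝ} {p' q' : Fin m → ℝ} (h : RelMaj p q p' q') :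
    DmaxExt H m p' q' ≤ DmaxExt H n p q := by
  rw [dmaxExt_eq_iInf, dmaxExt_eq_iInf]
  exact le_iInf fun w => iInf_le_of_le ⟨w.k, w.r, w.isProbVec, w.relMaj.trans h⟩ le_rfl

variable (hH : IsEntropy H)
include hH

lemma dmaxExt_one_one : DmaxExt H 1 (fun _ => 1) (fun _ => 1) = 0 := by
  have h : RelMaj (uniform 1) (uniform 1) (fun _ : Fin 1 => 1) (fun _ => 1) := by
    simpa only [uniform_one] using
      relMaj_uniform (isProbVec_uniform one_pos) (isProbVec_uniform one_pos) one_pos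
  refine le_antisymm ?_ zero_le
  rw [dmaxExt_eq_iInf]
  refine iInf_le_of_le ⟨1, uniform 1, isProbVec_uniform one_pos, h⟩ ?_
  rw [hH.deficit_uniform one_pos, ENNReal.ofReal_zero]

lemma dminExt_le_dmaxExt (p q : Fin n → ℝ) : DminExt H n p q ≤ DmaxExt H n p q := by
  rw [dminExt_eq_iSup, dmaxExt_eq_iInf]
  exact iSup_le fun w => le_iInf fun w' => ENNReal.ofReal_le_ofReal <|
    hH.deficit_le_deficit_of_relMaj w.isProbVec w'.isProbVec (w'.relMaj.trans w.relMaj)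

lemma dminExt_one_one : DminExt H 1 (fun _ => 1) (fun _ => 1) = 0 :=
  le_antisymm ((dminExt_le_dmaxExt hH _ _).trans_eq (dmaxExt_one_one hH)) zero_le

lemma UniformCoarsening.exists_deficit_nonneg {p q : Fin n → ℝ} (hp : IsProbVec p)
    (hq : IsProbVec q) (w : UniformCoarsening p q) :
    ∃ w' : UniformCoarsening p q, 0 ≤ deficit H w'.r ∧
      ENNReal.ofReal (deficit H w.r) = ENNReal.ofReal (deficit H w'.r) := by
  by_cases h : 0 ≤ deficit H w.r
  · exact ⟨w, h, rfl⟩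
  · have hunit : deficit H (unit hp hq).r = 0 := hH.deficit_uniform one_pos
    refine ⟨unit hp hq, hunit.ge, ?_⟩
    rw [hunit, ENNReal.ofReal_of_nonpos (not_le.mp h).le, ENNReal.ofReal_zero]

lemma dminExt_add_dminExt_le {p q : Fin n → ℝ} {p' q' : Fin m → ℝ} (hp : IsProbVec p)
    (hq : IsProbVec q) (hp' : IsProbVec p') (hq' : IsProbVec q') :
    DminExt H n p q + DminExt H m p' q' ≤ DminExt H (n * m) (kron p p') (kron q q') := by
  rw [dminExt_eq_iSup, dminExt_eq_iSup, dminExt_eq_iSup]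
  have : Nonempty (UniformCoarsening p q) := ⟨.unit hp hq⟩
  have : Nonempty (UniformCoarsening p' q') := ⟨.unit hp' hq'⟩
  refine ENNReal.iSup_add_iSup_le fun w w' => ?_
  obtain ⟨v, hv, hwv⟩ := w.exists_deficit_nonneg hH hp hq
  obtain ⟨v', hv', hwv'⟩ := w'.exists_deficit_nonneg hH hp' hq'
  calc ENNReal.ofReal (deficit H w.r) + ENNReal.ofReal (deficit H w'.r)
      = ENNReal.ofReal (deficit H (v.kron v').r) := by
        rw [hwv, hwv', ← ENNReal.ofReal_add hv hv']
        exact congrArg _ (hH.deficit_kron v.isProbVec v'.isProbVec).symm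
    _ ≤ _ := le_iSup_of_le (v.kron v') le_rfl

lemma dmaxExt_kron_le (p q : Fin n → ℝ) (p' q' : Fin m → ℝ) :
    DmaxExt H (n * m) (kron p p') (kron q q') ≤ DmaxExt H n p q + DmaxExt H m p' q' := by
  rw [dmaxExt_eq_iInf, dmaxExt_eq_iInf, dmaxExt_eq_iInf]
  exact ENNReal.le_iInf_add_iInf fun w w' => iInf_le_of_le (w.kron w') <|
    (congrArg ENNReal.ofReal (hH.deficit_kron w.isProbVec w'.isProbVec)).trans_le
      ENNReal.ofReal_add_le

end Extensions

/-- both extensions satisfy the data-processing inequality and vanish at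
`(1‖1)` (i.e. are monotone divergences), `D̲_H ≤ D̄_H`, and `D̲_H` is superadditive while
`D̄_H` is subadditive for Kronecker products. -/
theorem stmt9 (H : (n : ℕ) → (Fin n → ℝ) → ℝ) (hH : IsEntropy H) :
    IsMonotoneDivergence (DmaxExt H) ∧ IsMonotoneDivergence (DminExt H) ∧
    (∀ (n : ℕ) (p q : Fin n → ℝ), IsProbVec p → IsProbVec q →
      DminExt H n p q ≤ DmaxExt H n p q) ∧
    (∀ (n m : ℕ) (p q : Fin n → ℝ) (p' q' : Fin m → ℝ),
      IsProbVec p → IsProbVec q → IsProbVec p' → IsProbVec q' →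
      DminExt H n p q + DminExt H m p' q' ≤ DminExt H (n * m) (kron p p') (kron q q') ∧
      DmaxExt H (n * m) (kron p p') (kron q q') ≤ DmaxExt H n p q + DmaxExt H m p' q') :=
  ⟨⟨fun _ _ _ _ _ _ _ _ h => dmaxExt_le_of_relMaj h, dmaxExt_one_one hH⟩,
    ⟨fun _ _ _ _ _ _ _ _ h => dminExt_le_of_relMaj h, dminExt_one_one hH⟩,
    fun _ p q _ _ => dminExt_le_dmaxExt hH p q,
    fun _ _ p q p' q' hp hq hp' hq' =>
      ⟨dminExt_add_dminExt_le hH hp hq hp' hq', dmaxExt_kron_le hH p q p' q'⟩⟩
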